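/- Under compound symmetry with common variance S² > 0 and common correlation ρ satisfying −1/(2^K − 1) < ρ ≤ 1, for every nonempty subset A ⊆ {1,…,K} the sampling variance of the estimated factorial effect under a completely randomized assignment satisfies the bounds (4/N)(1 − 1/(2^K − 1)) S² < Var(τ̂_A) ≤ (4/N) S². -/

import Mathlib

/-!
Write `τ̂_A = ∑ᵢ cᵢ(ωᵢ)` with `cᵢ(z) = g_A(z) Yᵢ(z) / (r 2^(K-1))`. All moments of such linear
statistics follow from two facts: the design is invariant under permutations of the units, and
every assignment satisfies `∑ᵢ f(ωᵢ) = r ∑_z f(z)`. Averaging the latter over `i` gives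
`E f(ωᵢ) = 2^(-K) ∑_z f(z)`; averaging `f(ωᵢ) ∑_{j ≠ i} g(ωⱼ)` over `j ≠ i` gives `E f(ωᵢ) g(ωⱼ)`.
The result is Neyman's formula `Var τ̂_A = 2^(-2(K-1)) ∑_z S²(z) / r - S_A² / N`.
Under compound symmetry `S_A² = 2^(-2(K-1)) ∑_{z,z'} g_A(z) g_A(z') S²(z,z') = 4 (1 - ρ) S² / 2^K`,
because `∑_z g_A(z) = 0` for nonempty `A`; hence `Var τ̂_A = (4/N) S² (1 - (1 - ρ) / 2^K)`.
-/

open Finset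

noncomputable section

/-- A treatment combination in a 2^K factorial design: each of the K factors
is at its low level (`false`, coded −1) or high level (`true`, coded +1). -/
abbrev Combo (K : ℕ) := Fin K → Bool

/-- The completely randomized assignments: each of the 2^K treatment
combinations receives exactly `r` of the `N` units. -/
def Assignments (K N r : ℕ) : Finset (Fin N → Combo K) :=
  Finset.univ.filter (fun ω => ∀ z : Combo K, (Finset.univ.filter (fun i => ω i = z)).card = r)

/-- Expectation over the uniform distribution on completely randomized assignments. -/
def expect (K N r : ℕ) (f : (Fin N → Combo K) → ℝ) : ℝ :=
  (∑ ω ∈ Assignments K N r, f ω) / ((Assignments K N r).card : ℝ)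

/-- Variance over the uniform distribution on completely randomized assignments. -/
def variance (K N r : ℕ) (f : (Fin N → Combo K) → ℝ) : ℝ :=
  expect K N r (fun ω => (f ω - expect K N r f) ^ 2)

/-- Covariance over the uniform distribution on completely randomized assignments. -/
def covariance (K N r : ℕ) (f g : (Fin N → Combo K) → ℝ) : ℝ :=
  expect K N r (fun ω => (f ω - expect K N r f) * (g ω - expect K N r g))

/-- The assignment indicator W_i(z). -/
def Wvar (K N : ℕ) (ω : Fin N → Combo K) (i : Fin N) (z : Combo K) : ℝ :=
  if ω i = z then 1 else 0

/-- The population mean Ȳ(z) of the potential outcomes under z. -/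
def Ybar (K N : ℕ) (Y : Fin N → Combo K → ℝ) (z : Combo K) : ℝ :=
  (∑ i, Y i z) / (N : ℝ)

/-- The observed treatment mean Ȳ^obs(z) = (1/r) Σ_{i : W_i(z)=1} Y_i(z). -/
def YbarObs (K N r : ℕ) (Y : Fin N → Combo K → ℝ)
    (ω : Fin N → Combo K) (z : Combo K) : ℝ :=
  (∑ i, if ω i = z then Y i z else 0) / (r : ℝ)

/-- Finite-population variance S²(z) (divisor N−1). -/
def Ssq (K N : ℕ) (Y : Fin N → Combo K → ℝ) (z : Combo K) : ℝ :=
  (∑ i, (Y i z - Ybar K N Y z) ^ 2) / ((N : ℝ) - 1)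

/-- Finite-population covariance S²(z, z*) (divisor N−1). -/
def Scov (K N : ℕ) (Y : Fin N → Combo K → ℝ) (z zs : Combo K) : ℝ :=
  (∑ i, (Y i z - Ybar K N Y z) * (Y i zs - Ybar K N Y zs)) / ((N : ℝ) - 1)

/-- The contrast g_A(z) = Π_{k ∈ A} z_k ∈ {−1, +1}. -/
def gA (K : ℕ) (A : Finset (Fin K)) (z : Combo K) : ℝ :=
  ∏ k ∈ A, (if z k then (1 : ℝ) else -1)

/-- The unit-level factorial effect τ_{iA} = 2^{−(K−1)} Σ_z g_A(z) Y_i(z). -/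
def tauUnit (K N : ℕ) (Y : Fin N → Combo K → ℝ) (A : Finset (Fin K)) (i : Fin N) : ℝ :=
  (∑ z : Combo K, gA K A z * Y i z) / (2 : ℝ) ^ (K - 1)

/-- The population-level factorial effect τ̄_A = (1/N) Σ_i τ_{iA}. -/
def tauBar (K N : ℕ) (Y : Fin N → Combo K → ℝ) (A : Finset (Fin K)) : ℝ :=
  (∑ i, tauUnit K N Y A i) / (N : ℝ)

/-- The estimated factorial effect τ̂_A = 2^{−(K−1)} Σ_z g_A(z) Ȳ^obs(z). -/
def tauHat (K N r : ℕ) (Y : Fin N → Combo K → ℝ) (A : Finset (Fin K))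
    (ω : Fin N → Combo K) : ℝ :=
  (∑ z : Combo K, gA K A z * YbarObs K N r Y ω z) / (2 : ℝ) ^ (K - 1)

/-- The finite-population variance S_A² of the unit-level factorial effects. -/
def SsqA (K N : ℕ) (Y : Fin N → Combo K → ℝ) (A : Finset (Fin K)) : ℝ :=
  (∑ i, (tauUnit K N Y A i - tauBar K N Y A) ^ 2) / ((N : ℝ) - 1)

/-- Strict additivity: unit-level differences of potential outcomes between any
two treatment combinations are constant across units. -/
def StrictAdditivity (K N : ℕ) (Y : Fin N → Combo K → ℝ) : Prop :=
  ∀ z zs : Combo K, ∀ i i' : Fin N, Y i z - Y i zs = Y i' z - Y i' zs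

/-- Compound symmetry: common variance S² > 0 and common correlation ρ,
i.e. S²(z) = S² for all z and S²(z,z*) = ρ S² for all z ≠ z*. -/
def CompoundSymmetry (K N : ℕ) (Y : Fin N → Combo K → ℝ) (S2 ρ : ℝ) : Prop :=
  0 < S2 ∧ (∀ z : Combo K, Ssq K N Y z = S2) ∧
    ∀ z zs : Combo K, z ≠ zs → Scov K N Y z zs = ρ * S2

open scoped BigOperators

def sampleVar (N : ℕ) (x : Fin N → ℝ) : ℝ :=
  (∑ i, (x i - (∑ j, x j) / N) ^ 2) / ((N : ℝ) - 1)

theorem sampleVar_const_mul (N : ℕ) (a : ℝ) (x : Fin N → ℝ) :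
    sampleVar N (fun i => a * x i) = a ^ 2 * sampleVar N x := by
  simp only [sampleVar, ← mul_sum, mul_div_assoc, ← mul_sub, mul_pow]

theorem expect_eq_expect_assignments (K N r : ℕ) (f : (Fin N → Combo K) → ℝ) :
    expect K N r f = 𝔼 ω ∈ Assignments K N r, f ω :=
  (expect_eq_sum_div_card _ _).symm

section Randomization

variable {K N r : ℕ}

theorem comp_perm_mem_assignments_iff (σ : Equiv.Perm (Fin N)) {ω : Fin N → Combo K} :
    ω ∘ σ ∈ Assignments K N r ↔ ω ∈ Assignments K N r := by
  have hcard : ∀ z, #{i | ω (σ i) = z} = #{i | ω i = z} := fun z =>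
    card_equiv σ (by simp)
  simp only [Assignments, mem_filter, mem_univ, true_and, Function.comp_apply, hcard]

theorem expect_comp_perm (σ : Equiv.Perm (Fin N)) (F : (Fin N → Combo K) → ℝ) :
    𝔼 ω ∈ Assignments K N r, F (ω ∘ σ) = 𝔼 ω ∈ Assignments K N r, F ω :=
  expect_equiv (σ.symm.arrowCongr (Equiv.refl _))
    (fun _ => (comp_perm_mem_assignments_iff σ).symm) (fun _ _ => rfl)

theorem sum_apply_of_mem_assignments {ω : Fin N → Combo K} (hω : ω ∈ Assignments K N r)
    (f : Combo K → ℝ) : ∑ i, f (ω i) = r * ∑ z, f z := by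
  rw [← sum_fiberwise univ ω, mul_sum]
  refine sum_congr rfl fun z _ => ?_
  rw [sum_congr rfl fun i hi => congrArg f (mem_filter.mp hi).2, sum_const,
    (mem_filter.mp hω).2 z, nsmul_eq_mul]

theorem assignments_nonempty (hN : N = r * 2 ^ K) : (Assignments K N r).Nonempty := by
  let e : Fin N ≃ Combo K × Fin r := Fintype.equivOfCardEq (by simp [hN, Nat.mul_comm])
  refine ⟨fun i => (e i).1, mem_filter.mpr ⟨mem_univ _, fun z => ?_⟩⟩
  calc #{i | (e i).1 = z} = #({z} ×ˢ (univ : Finset (Fin r))) :=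
        card_equiv e (by simp [Prod.ext_iff, eq_comm])
    _ = r := by simp

theorem expect_apply (hN : N = r * 2 ^ K) (hr : 0 < r) (i : Fin N) (f : Combo K → ℝ) :
    𝔼 ω ∈ Assignments K N r, f (ω i) = (∑ z, f z) / 2 ^ K := by
  have hsymm : ∀ j, 𝔼 ω ∈ Assignments K N r, f (ω j) = 𝔼 ω ∈ Assignments K N r, f (ω i) :=
    fun j => by simpa using expect_comp_perm (Equiv.swap i j) (fun ω => f (ω i))
  have hsum : (N : ℝ) * 𝔼 ω ∈ Assignments K N r, f (ω i) = r * ∑ z, f z := by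
    calc (N : ℝ) * 𝔼 ω ∈ Assignments K N r, f (ω i)
        = ∑ j, 𝔼 ω ∈ Assignments K N r, f (ω j) := by simp [hsymm]
      _ = 𝔼 ω ∈ Assignments K N r, ∑ j, f (ω j) := (expect_sum_comm _ _ _).symm
      _ = r * ∑ z, f z := by
        rw [expect_congr rfl fun ω hω => sum_apply_of_mem_assignments hω f,
          expect_const (assignments_nonempty hN)]
  have hN' : (N : ℝ) = r * 2 ^ K := by exact_mod_cast hN
  have hr' : (r : ℝ) ≠ 0 := by positivity
  rw [hN', mul_assoc] at hsum
  rw [eq_div_iff (by positivity)]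
  linear_combination (mul_left_cancel₀ hr' hsum)

theorem expect_apply_mul_apply (hN : N = r * 2 ^ K) (hr : 0 < r) {i j : Fin N} (hij : i ≠ j)
    (f g : Combo K → ℝ) :
    𝔼 ω ∈ Assignments K N r, f (ω i) * g (ω j)
      = (r * (∑ z, f z) * (∑ z, g z) - ∑ z, f z * g z) / (2 ^ K * ((N : ℝ) - 1)) := by
  have hsymm : ∀ j' ∈ univ.erase i, 𝔼 ω ∈ Assignments K N r, f (ω i) * g (ω j')
      = 𝔼 ω ∈ Assignments K N r, f (ω i) * g (ω j) := fun j' hj' => by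
    simpa [Equiv.swap_apply_of_ne_of_ne hij (ne_of_mem_erase hj').symm] using
      expect_comp_perm (Equiv.swap j j') (fun ω => f (ω i) * g (ω j))
  have hdiag : 𝔼 ω ∈ Assignments K N r, f (ω i) * g (ω i) = (∑ z, f z * g z) / 2 ^ K :=
    expect_apply hN hr i fun z => f z * g z
  have hsum : ((N : ℝ) - 1) * 𝔼 ω ∈ Assignments K N r, f (ω i) * g (ω j)
      = (r * (∑ z, f z) * (∑ z, g z) - ∑ z, f z * g z) / 2 ^ K := by
    calc ((N : ℝ) - 1) * 𝔼 ω ∈ Assignments K N r, f (ω i) * g (ω j)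
        = ∑ j' ∈ univ.erase i, 𝔼 ω ∈ Assignments K N r, f (ω i) * g (ω j') := by
          rw [sum_congr rfl hsymm, sum_const, card_erase_of_mem (mem_univ i), card_univ,
            Fintype.card_fin, nsmul_eq_mul, Nat.cast_sub i.pos, Nat.cast_one]
      _ = 𝔼 ω ∈ Assignments K N r, f (ω i) * ∑ j' ∈ univ.erase i, g (ω j') := by
          simp only [mul_sum, expect_sum_comm]
      _ = 𝔼 ω ∈ Assignments K N r, ((r * ∑ z, g z) * f (ω i) - f (ω i) * g (ω i)) := by
          refine expect_congr rfl fun ω hω => ?_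
          rw [sum_erase_eq_sub (mem_univ i), sum_apply_of_mem_assignments hω]
          ring
      _ = _ := by
          rw [expect_sub_distrib, ← mul_expect, expect_apply hN hr, hdiag]
          ring
  have hN1 : (N : ℝ) - 1 ≠ 0 := by
    have : 1 < N := by have := Fin.val_ne_of_ne hij; omega
    have : (1 : ℝ) < N := by exact_mod_cast this
    linarith
  rw [← div_div, ← hsum, mul_div_cancel_left₀ _ hN1]

theorem expect_sq_sum_apply_of_sum_eq_zero (hN : N = r * 2 ^ K) (hr : 0 < r) (hN1 : 1 < N)
    (d : Fin N → Combo K → ℝ) (hd : ∀ z, ∑ i, d i z = 0) :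
    𝔼 ω ∈ Assignments K N r, (∑ i, d i (ω i)) ^ 2
      = r / ((N : ℝ) - 1) * ∑ i, (∑ z, d i z ^ 2 - (∑ z, d i z) ^ 2 / 2 ^ K) := by
  -- `P i j` is the moment of a pair `i ≠ j`; its full row sum vanishes because `d` is centred,
  -- so the off-diagonal part of row `i` is `-P i i`.
  set P : Fin N → Fin N → ℝ := fun i j =>
    (r * (∑ z, d i z) * (∑ z, d j z) - ∑ z, d i z * d j z) / (2 ^ K * ((N : ℝ) - 1))
  have hP : ∀ i, ∑ j, P i j = 0 := fun i => by
    have hsum : ∑ j, ∑ z, d j z = 0 := by rw [sum_comm]; simp [hd]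
    have hcross : ∑ j, ∑ z, d i z * d j z = 0 := by
      rw [sum_comm]; simp [← mul_sum, hd]
    simp only [P, ← sum_div, sum_sub_distrib, ← mul_sum, hsum, hcross]
    simp
  have hrow : ∀ i, ∑ j, 𝔼 ω ∈ Assignments K N r, d i (ω i) * d j (ω j)
      = r / ((N : ℝ) - 1) * (∑ z, d i z ^ 2 - (∑ z, d i z) ^ 2 / 2 ^ K) := fun i => by
    have hdiag : 𝔼 ω ∈ Assignments K N r, d i (ω i) * d i (ω i) = (∑ z, d i z * d i z) / 2 ^ K :=
      expect_apply hN hr i fun z => d i z * d i z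
    have hoff : ∀ j ∈ univ.erase i, 𝔼 ω ∈ Assignments K N r, d i (ω i) * d j (ω j) = P i j :=
      fun j hj => expect_apply_mul_apply hN hr (ne_of_mem_erase hj).symm _ _
    have hN' : (N : ℝ) = r * 2 ^ K := by exact_mod_cast hN
    have hN1' : (N : ℝ) - 1 ≠ 0 := by
      have : (1 : ℝ) < N := by exact_mod_cast hN1
      linarith
    rw [← add_sum_erase _ _ (mem_univ i), hdiag, sum_congr rfl hoff,
      sum_erase_eq_sub (mem_univ i), hP]
    simp only [sq]
    field_simp
    rw [hN']
    ring
  calc 𝔼 ω ∈ Assignments K N r, (∑ i, d i (ω i)) ^ 2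
      = ∑ i, ∑ j, 𝔼 ω ∈ Assignments K N r, d i (ω i) * d j (ω j) := by
        simp only [sq, sum_mul_sum, expect_sum_comm]
    _ = _ := by rw [mul_sum]; exact sum_congr rfl fun i _ => hrow i

theorem variance_sum_apply (hN : N = r * 2 ^ K) (hr : 0 < r) (hN1 : 1 < N)
    (c : Fin N → Combo K → ℝ) :
    variance K N r (fun ω => ∑ i, c i (ω i))
      = r * (∑ z, sampleVar N (fun i => c i z) - sampleVar N (fun i => ∑ z, c i z) / 2 ^ K) := by
  set μ : Combo K → ℝ := fun z => (∑ j, c j z) / N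
  set d : Fin N → Combo K → ℝ := fun i z => c i z - μ z
  have hN0 : (N : ℝ) ≠ 0 := by positivity
  have hN' : (N : ℝ) = r * 2 ^ K := by exact_mod_cast hN
  have hd : ∀ z, ∑ i, d i z = 0 := fun z => by
    simp only [d, μ, sum_sub_distrib, sum_const, card_univ, Fintype.card_fin, nsmul_eq_mul]
    field_simp
    ring
  have hmean : expect K N r (fun ω => ∑ i, c i (ω i)) = (∑ i, ∑ z, c i z) / 2 ^ K := by
    rw [expect_eq_expect_assignments, expect_sum_comm, sum_div]
    exact sum_congr rfl fun i _ => expect_apply hN hr i (c i)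
  have hcenter : ∀ ω ∈ Assignments K N r,
      ∑ i, c i (ω i) - expect K N r (fun ω => ∑ i, c i (ω i)) = ∑ i, d i (ω i) := by
    intro ω hω
    simp only [d, sum_sub_distrib, sum_apply_of_mem_assignments hω μ, hmean, μ,
      ← sum_div]
    rw [sum_comm, hN']
    field_simp
  have hrow : ∀ i, ∑ z, d i z = ∑ z, c i z - (∑ j, ∑ z, c j z) / N := fun i => by
    simp only [d, μ, sum_sub_distrib, ← sum_div]
    rw [sum_comm (s := univ)]
  rw [variance, expect_eq_expect_assignments, expect_congr rfl fun ω hω => by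
      rw [hcenter ω hω], expect_sq_sum_apply_of_sum_eq_zero hN hr hN1 d hd]
  have hcol : ∑ z, ∑ i, (c i z - (∑ j, c j z) / N) ^ 2 = ∑ i, ∑ z, d i z ^ 2 :=
    sum_comm
  simp only [sampleVar, ← hrow, sum_sub_distrib, ← sum_div, hcol]
  ring

end Randomization

section FactorialEffects

variable {K N : ℕ}

theorem gA_sq (A : Finset (Fin K)) (z : Combo K) : gA K A z ^ 2 = 1 := by
  rw [gA, ← prod_pow]
  exact prod_eq_one fun k _ => by split <;> norm_num

theorem sum_gA_eq_zero {A : Finset (Fin K)} (hA : A.Nonempty) : ∑ z : Combo K, gA K A z = 0 := by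
  obtain ⟨k, hk⟩ := hA
  have hprod : ∀ z : Combo K,
      gA K A z = ∏ l, (if l ∈ A then (if z l then (1 : ℝ) else -1) else 1) := fun z => by
    rw [prod_ite_mem, univ_inter, gA]
  simp only [hprod]
  rw [← Fintype.prod_sum fun l (b : Bool) => if l ∈ A then (if b then (1 : ℝ) else -1) else 1]
  exact prod_eq_zero (mem_univ k) (by simp [hk])

theorem tauHat_eq_sum_apply (r : ℕ) (Y : Fin N → Combo K → ℝ) (A : Finset (Fin K))
    (ω : Fin N → Combo K) :
    tauHat K N r Y A ω = ∑ i, (r : ℝ)⁻¹ * (gA K A (ω i) * Y i (ω i) / 2 ^ (K - 1)) := by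
  have hselect : ∑ z, gA K A z * ∑ i, (if ω i = z then Y i z else 0)
      = ∑ i, gA K A (ω i) * Y i (ω i) := by
    simp only [mul_sum, mul_ite, mul_zero]
    rw [sum_comm]
    simp
  simp only [tauHat, YbarObs, mul_div_assoc', ← sum_div, hselect, ← mul_sum]
  ring

theorem variance_tauHat {r : ℕ} (hN : N = r * 2 ^ K) (hr : 0 < r) (hN1 : 1 < N)
    (Y : Fin N → Combo K → ℝ) (A : Finset (Fin K)) :
    variance K N r (tauHat K N r Y A)
      = (∑ z, Ssq K N Y z) / (r * (2 ^ (K - 1)) ^ 2) - SsqA K N Y A / N := by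
  have hcol : ∀ z, (fun i => (r : ℝ)⁻¹ * (gA K A z * Y i z / 2 ^ (K - 1)))
      = fun i => gA K A z / (r * 2 ^ (K - 1)) * Y i z := fun z => funext fun i => by ring
  have hrow : (fun i => ∑ z, (r : ℝ)⁻¹ * (gA K A z * Y i z / 2 ^ (K - 1)))
      = fun i => (r : ℝ)⁻¹ * tauUnit K N Y A i := funext fun i => by
    rw [tauUnit, ← mul_sum, sum_div]
  have hSsq : ∀ z, sampleVar N (fun i => Y i z) = Ssq K N Y z := fun _ => rfl
  have hSsqA : sampleVar N (tauUnit K N Y A) = SsqA K N Y A := rfl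
  have hN' : (N : ℝ) = r * 2 ^ K := by exact_mod_cast hN
  rw [funext (tauHat_eq_sum_apply r Y A),
    variance_sum_apply hN hr hN1 fun i z => (r : ℝ)⁻¹ * (gA K A z * Y i z / 2 ^ (K - 1)), hrow]
  simp only [hcol, sampleVar_const_mul, div_pow, gA_sq, hSsq, hSsqA]
  rw [← mul_sum, hN']
  field_simp

theorem SsqA_eq_sum_Scov (Y : Fin N → Combo K → ℝ) (A : Finset (Fin K)) :
    SsqA K N Y A
      = (∑ z, ∑ z', gA K A z * gA K A z' * Scov K N Y z z') / (2 ^ (K - 1)) ^ 2 := by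
  have hdev : ∀ i, tauUnit K N Y A i - tauBar K N Y A
      = (∑ z, gA K A z * (Y i z - Ybar K N Y z)) / 2 ^ (K - 1) := fun i => by
    simp only [tauBar, tauUnit, Ybar, mul_sub, sum_sub_distrib, ← sum_div,
      mul_div_assoc', sub_div]
    rw [sum_comm (s := univ) (t := univ)]
    simp only [mul_sum]
    ring
  simp only [SsqA, Scov, hdev, sq, mul_sum, sum_mul, sum_div]
  rw [sum_comm]
  refine sum_congr rfl fun z _ => ?_
  rw [sum_comm]
  refine sum_congr rfl fun z' _ => sum_congr rfl fun i _ => ?_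
  ring

theorem SsqA_of_compoundSymmetry {Y : Fin N → Combo K → ℝ} {S2 ρ : ℝ}
    (hcs : CompoundSymmetry K N Y S2 ρ) {A : Finset (Fin K)} (hA : A.Nonempty) :
    SsqA K N Y A = 2 ^ K * (1 - ρ) * S2 / (2 ^ (K - 1)) ^ 2 := by
  have hScov : ∀ z z', Scov K N Y z z' = ρ * S2 + if z = z' then (1 - ρ) * S2 else 0 := by
    intro z z'
    split_ifs with h
    · rw [h, show Scov K N Y z' z' = Ssq K N Y z' by simp only [Scov, Ssq, sq], hcs.2.1]
      ring
    · rw [hcs.2.2 z z' h, add_zero]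
  have hcross : ∑ z, ∑ z', gA K A z * gA K A z' * (ρ * S2) = 0 := by
    simp only [← sum_mul, ← mul_sum, sum_gA_eq_zero hA, mul_zero, zero_mul,
      sum_const_zero]
  have hdiag : ∑ z, ∑ z', gA K A z * gA K A z' * (if z = z' then (1 - ρ) * S2 else 0)
      = 2 ^ K * (1 - ρ) * S2 := by
    simp only [mul_ite, mul_zero, sum_ite_eq, mem_univ, if_true, ← sq, gA_sq, one_mul,
      sum_const, card_univ, Fintype.card_fun, Fintype.card_bool, Fintype.card_fin, nsmul_eq_mul,
      Nat.cast_pow, Nat.cast_ofNat]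
    ring
  rw [SsqA_eq_sum_Scov]
  simp only [hScov, mul_add, sum_add_distrib, hcross, hdiag, zero_add]

theorem variance_tauHat_of_compoundSymmetry {r : ℕ} (hK : 1 ≤ K) (hr : 0 < r)
    (hN : N = r * 2 ^ K) {Y : Fin N → Combo K → ℝ} {S2 ρ : ℝ}
    (hcs : CompoundSymmetry K N Y S2 ρ) {A : Finset (Fin K)} (hA : A.Nonempty) :
    variance K N r (tauHat K N r Y A) = 4 / N * S2 * (1 - (1 - ρ) / 2 ^ K) := by
  have hN1 : 1 < N := by
    rw [hN]
    exact one_lt_mul_of_le_of_lt hr (Nat.one_lt_two_pow (by omega))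
  have hN' : (N : ℝ) = r * 2 ^ K := by exact_mod_cast hN
  have hpow : (2 : ℝ) ^ K = 2 * 2 ^ (K - 1) := by rw [← pow_succ', Nat.sub_add_cancel hK]
  rw [variance_tauHat hN hr hN1, SsqA_of_compoundSymmetry hcs hA]
  simp only [hcs.2.1, sum_const, card_univ, Fintype.card_fun, Fintype.card_bool,
    Fintype.card_fin, nsmul_eq_mul, Nat.cast_pow, Nat.cast_ofNat]
  rw [hN', hpow]
  field_simp
  ring

end FactorialEffects

/-- Corollary 3. Under compound symmetry with
−1/(2^K − 1) < ρ ≤ 1, (4/N)(1 − 1/(2^K−1)) S² < Var(τ̂_A) ≤ (4/N) S². -/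
theorem tauHat_variance_bounds (K N r : ℕ) (hK : 1 ≤ K) (hr : 0 < r)
    (hN : N = r * 2 ^ K) (Y : Fin N → Combo K → ℝ) (S2 ρ : ℝ)
    (hcs : CompoundSymmetry K N Y S2 ρ)
    (hρl : -(1 / ((2 : ℝ) ^ K - 1)) < ρ) (hρu : ρ ≤ 1)
    (A : Finset (Fin K)) (hA : A.Nonempty) :
    (4 / (N : ℝ)) * (1 - 1 / ((2 : ℝ) ^ K - 1)) * S2 <
        variance K N r (tauHat K N r Y A) ∧
      variance K N r (tauHat K N r Y A) ≤ (4 / (N : ℝ)) * S2 := by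
  rw [variance_tauHat_of_compoundSymmetry hK hr hN hcs hA]
  have hscale : 0 < 4 / (N : ℝ) * S2 := by
    have : 0 < N := hN ▸ Nat.mul_pos hr (Nat.two_pow_pos K)
    have := hcs.1
    positivity
  have hm : (2 : ℝ) ≤ 2 ^ K := le_self_pow₀ one_le_two (by omega)
  constructor
  · have hρm : -1 < ρ * (2 ^ K - 1) := by
      have := mul_lt_mul_of_pos_right hρl (by linarith : (0 : ℝ) < 2 ^ K - 1)
      rwa [neg_mul, one_div_mul_cancel (by linarith)] at this
    have hfrac : (1 - ρ) / 2 ^ K < 1 / (2 ^ K - 1) := by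
      rw [div_lt_div_iff₀ (by linarith) (by linarith)]
      linarith
    calc 4 / (N : ℝ) * (1 - 1 / (2 ^ K - 1)) * S2
        = 4 / N * S2 * (1 - 1 / (2 ^ K - 1)) := by ring
      _ < 4 / N * S2 * (1 - (1 - ρ) / 2 ^ K) := by gcongr
  · exact mul_le_of_le_one_right hscale.le (by
      have : 0 ≤ (1 - ρ) / 2 ^ K := div_nonneg (by linarith) (by positivity)
      linarith)
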